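/- arXiv:2306.12275 — 2 statements merged into one kernel-verified Lean document; each statement's English description precedes it below -/
import Mathlib

section
/- Let Y_1, Y_2, ... be i.i.d. nonnegative strictly α-stable random variables (with Laplace transform e^{-λ^α}, 0 < α < 1), let Z_0 = 0 and Z_n = Y_1 + ... + Y_n, and let P be an N-valued random variable independent of (Y_n). Let Ȳ ∼ ν be independent of (Y_n) and P, where ν is the law of Y_1. Define Ỹ = P^{-1/α} Z_P on {P ≠ 0} and Ỹ = Ȳ on {P = 0}. Then Z_P = P^{1/α} Ỹ, Ỹ has law ν, and Ỹ is independent of P. -/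
/-!
On `{P = n}` with `n ≠ 0`, `Ỹ` is `n^{-1/α} Z_n`, whose Laplace transform is
`(e^{-(l n^{-1/α})^α})^n = e^{-l^α}` by independence of the steps; so it has law `ν`, and it is
independent of `P` because `(Y_i)` is. On `{P = 0}`, `Ỹ = Ȳ` has the same two properties.
Summing over the values of `P`, the conditional law of `Ỹ` given `P = n` is `ν` for every `n`,
i.e. `Ỹ ∼ ν` and `Ỹ` is independent of `P`.

Laplace transforms determine finite measures on `[0, ∞)`: the push-forward by `x ↦ e^{-x}` turns
them into the moments of measures on `[0, 1]`, and these determine the measure by Weierstrass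
approximation.
-/

open MeasureTheory ProbabilityTheory Real Set

namespace MeasureTheory

section Moments

variable {μ ν : Measure ℝ} {a b : ℝ} [IsFiniteMeasure μ]

lemma integrable_polynomial_eval_of_ae_mem_Icc
    (hμ : ∀ᵐ x ∂μ, x ∈ Icc a b) (p : Polynomial ℝ) : Integrable (fun x => p.eval x) μ := by
  rw [← Measure.restrict_eq_self_of_ae_mem hμ]
  exact p.continuous.continuousOn.integrableOn_compact isCompact_Icc

lemma abs_integral_sub_integral_polynomial_eval_le (hμ : ∀ᵐ x ∂μ, x ∈ Icc a b) {f : ℝ → ℝ}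
    (hf : Integrable f μ) {p : Polynomial ℝ} {ε : ℝ} (hp : ∀ x ∈ Icc a b, |p.eval x - f x| ≤ ε) :
    |∫ x, f x ∂μ - ∫ x, p.eval x ∂μ| ≤ ε * μ.real univ := by
  rw [← integral_sub hf (integrable_polynomial_eval_of_ae_mem_Icc hμ p), ← Real.norm_eq_abs]
  refine norm_integral_le_of_norm_le_const ?_
  filter_upwards [hμ] with x hx
  rw [Real.norm_eq_abs, abs_sub_comm]
  exact hp x hx

variable [IsFiniteMeasure ν]

lemma integral_polynomial_eval_eq_of_integral_pow_eq
    (hμ : ∀ᵐ x ∂μ, x ∈ Icc a b) (hν : ∀ᵐ x ∂ν, x ∈ Icc a b)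
    (h : ∀ n : ℕ, ∫ x, x ^ n ∂μ = ∫ x, x ^ n ∂ν) (p : Polynomial ℝ) :
    ∫ x, p.eval x ∂μ = ∫ x, p.eval x ∂ν := by
  induction p using Polynomial.induction_on' with
  | add p q hp hq =>
    simp only [Polynomial.eval_add]
    rw [integral_add (integrable_polynomial_eval_of_ae_mem_Icc hμ p)
        (integrable_polynomial_eval_of_ae_mem_Icc hμ q),
      integral_add (integrable_polynomial_eval_of_ae_mem_Icc hν p)
        (integrable_polynomial_eval_of_ae_mem_Icc hν q), hp, hq]
  | monomial n c =>
    simp only [Polynomial.eval_monomial]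
    rw [integral_const_mul, integral_const_mul, h n]

theorem Measure.ext_of_integral_pow_eq_of_ae_mem_Icc
    (hμ : ∀ᵐ x ∂μ, x ∈ Icc a b) (hν : ∀ᵐ x ∂ν, x ∈ Icc a b)
    (h : ∀ n : ℕ, ∫ x, x ^ n ∂μ = ∫ x, x ^ n ∂ν) : μ = ν := by
  refine ext_of_forall_integral_eq_of_IsFiniteMeasure fun g => eq_of_forall_dist_le fun ε hε => ?_
  set C := μ.real univ + ν.real univ
  have hC : 0 ≤ C := by positivity
  obtain ⟨p, hp⟩ := exists_polynomial_near_of_continuousOn a b g g.continuous.continuousOn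
    (ε / (C + 1)) (by positivity)
  have hp' : ∀ x ∈ Icc a b, |p.eval x - g x| ≤ ε / (C + 1) := fun x hx => (hp x hx).le
  have hgμ := abs_integral_sub_integral_polynomial_eval_le hμ (g.integrable μ) hp'
  have hgν := abs_integral_sub_integral_polynomial_eval_le hν (g.integrable ν) hp'
  calc dist (∫ x, g x ∂μ) (∫ x, g x ∂ν)
      = |(∫ x, g x ∂μ - ∫ x, p.eval x ∂μ) - (∫ x, g x ∂ν - ∫ x, p.eval x ∂ν)| := by
        rw [Real.dist_eq, integral_polynomial_eval_eq_of_integral_pow_eq hμ hν h p]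
        ring_nf
    _ ≤ ε / (C + 1) * C := by
        refine (abs_sub _ _).trans ?_
        linarith
    _ ≤ ε := by
        rw [div_mul_eq_mul_div, div_le_iff₀ (by positivity)]
        nlinarith

theorem Measure.ext_of_integral_exp_neg_mul_eq (hμ : ∀ᵐ x ∂μ, 0 ≤ x) (hν : ∀ᵐ x ∂ν, 0 ≤ x)
    (h : ∀ l : ℝ, 0 ≤ l → ∫ x, exp (-(l * x)) ∂μ = ∫ x, exp (-(l * x)) ∂ν) : μ = ν := by
  have hcont : Continuous fun x : ℝ => exp (-x) := by fun_prop
  have hmem : ∀ κ : Measure ℝ, (∀ᵐ x ∂κ, 0 ≤ x) →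
      ∀ᵐ y ∂κ.map (fun x => exp (-x)), y ∈ Icc (0 : ℝ) 1 := by
    intro κ hκ
    refine (ae_map_iff hcont.aemeasurable measurableSet_Icc).mpr ?_
    filter_upwards [hκ] with x hx
    exact ⟨(exp_pos _).le, exp_le_one_iff.mpr (neg_nonpos.mpr hx)⟩
  have hmoment : ∀ (κ : Measure ℝ) (n : ℕ),
      ∫ y, y ^ n ∂κ.map (fun x => exp (-x)) = ∫ x, exp (-(n * x)) ∂κ := by
    intro κ n
    rw [integral_map hcont.aemeasurable (by fun_prop)]
    simp_rw [← exp_nat_mul, mul_neg]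
  refine (hcont.measurableEmbedding (exp_injective.comp neg_injective)).map_injective
    (Measure.ext_of_integral_pow_eq_of_ae_mem_Icc (hmem μ hμ) (hmem ν hν) fun n => ?_)
  rw [hmoment, hmoment, h n n.cast_nonneg]

end Moments
end MeasureTheory

namespace ProbabilityTheory

section RandomIndex

variable {Ω ι β : Type*} {mΩ : MeasurableSpace Ω} [MeasurableSpace ι] [Countable ι]
  [MeasurableSingletonClass ι] [MeasurableSpace β] {μ : Measure Ω} {ν : Measure β}
  {X : ι → Ω → β} {P : Ω → ι}

lemma measurable_apply_randomIndex (hX : ∀ i, Measurable (X i)) (hP : Measurable P) :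
    Measurable fun ω => X (P ω) ω :=
  (measurable_from_prod_countable_left (f := fun q : Ω × ι => X q.2 q.1) hX).comp
    (measurable_id.prodMk hP)

lemma measure_randomIndex_preimage_inter_preimage (hX : ∀ i, Measurable (X i)) (hP : Measurable P)
    (hlaw : ∀ i, μ.map (X i) = ν) (hindep : ∀ i, IndepFun (X i) P μ)
    {A : Set β} (hA : MeasurableSet A) (B : Set ι) :
    μ ((fun ω => X (P ω) ω) ⁻¹' A ∩ P ⁻¹' B) = ν A * μ (P ⁻¹' B) := by
  set Z := fun ω => X (P ω) ω
  have hfiber : ∀ i, μ.restrict (Z ⁻¹' A) (P ⁻¹' {i}) = ν A * μ (P ⁻¹' {i}) := by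
    intro i
    have hZ : P ⁻¹' {i} ∩ Z ⁻¹' A = P ⁻¹' {i} ∩ X i ⁻¹' A := by
      ext ω
      simp +contextual [Z]
    rw [Measure.restrict_apply (hP (measurableSet_singleton i)), hZ, Set.inter_comm,
      (hindep i).measure_inter_preimage_eq_mul _ _ hA (measurableSet_singleton i),
      ← hlaw i, Measure.map_apply (hX i) hA]
  have hsingleton : ∀ i ∈ B, MeasurableSet (P ⁻¹' {i}) := fun i _ =>
    hP (measurableSet_singleton i)
  calc μ (Z ⁻¹' A ∩ P ⁻¹' B) = μ.restrict (Z ⁻¹' A) (P ⁻¹' B) := by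
        rw [Measure.restrict_apply (hP B.to_countable.measurableSet), Set.inter_comm]
    _ = ∑' i : B, ν A * μ (P ⁻¹' {(i : ι)}) := by
        rw [← tsum_measure_preimage_singleton B.to_countable hsingleton]
        exact tsum_congr fun i => hfiber i
    _ = ν A * μ (P ⁻¹' B) := by
        rw [ENNReal.tsum_mul_left, tsum_measure_preimage_singleton B.to_countable hsingleton]

theorem map_randomIndex_eq_and_indepFun [IsProbabilityMeasure μ] (hX : ∀ i, Measurable (X i))
    (hP : Measurable P) (hlaw : ∀ i, μ.map (X i) = ν) (hindep : ∀ i, IndepFun (X i) P μ) :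
    μ.map (fun ω => X (P ω) ω) = ν ∧ IndepFun (fun ω => X (P ω) ω) P μ := by
  have hZ := measurable_apply_randomIndex hX hP
  have hjoint {A : Set β} (hA : MeasurableSet A) (B : Set ι) :=
    measure_randomIndex_preimage_inter_preimage hX hP hlaw hindep hA B
  have hmap : μ.map (fun ω => X (P ω) ω) = ν := by
    ext A hA
    simpa [Measure.map_apply hZ hA] using hjoint hA univ
  refine ⟨hmap, (indepFun_iff_measure_inter_preimage_eq_mul).mpr fun A B hA _ => ?_⟩
  rw [hjoint hA B, ← hmap, Measure.map_apply hZ hA]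

end RandomIndex

section StableSums

variable {Ω : Type*} {mΩ : MeasurableSpace Ω} {μ : Measure Ω} {ν : Measure ℝ} {Y : ℕ → Ω → ℝ}

noncomputable def scaledPartialSum (α : ℝ) (Y : ℕ → Ω → ℝ) (n : ℕ) (ω : Ω) : ℝ :=
  ((n : ℝ) ^ (1 / α))⁻¹ * ∑ i ∈ Finset.range n, Y i ω

lemma measurable_scaledPartialSum (hY : ∀ i, Measurable (Y i)) (α : ℝ) (n : ℕ) :
    Measurable (scaledPartialSum α Y n) :=
  (Finset.measurable_sum _ fun i _ => hY i).const_mul _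

lemma integral_exp_neg_mul_sum_range (hY : ∀ i, Measurable (Y i)) (hindep : iIndepFun Y μ)
    (hident : ∀ i, μ.map (Y i) = ν) (l : ℝ) (n : ℕ) :
    ∫ ω, exp (-(l * ∑ i ∈ Finset.range n, Y i ω)) ∂μ = (∫ x, exp (-(l * x)) ∂ν) ^ n := by
  have hmgf : ∀ i, mgf (Y i) μ (-l) = ∫ x, exp (-(l * x)) ∂ν := by
    intro i
    rw [← hident i, integral_map (hY i).aemeasurable (by fun_prop), mgf]
    simp_rw [neg_mul]
  calc ∫ ω, exp (-(l * ∑ i ∈ Finset.range n, Y i ω)) ∂μ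
      = mgf (∑ i ∈ Finset.range n, Y i) μ (-l) := by
        simp only [mgf, Finset.sum_apply, neg_mul]
    _ = (∫ x, exp (-(l * x)) ∂ν) ^ n := by
        rw [hindep.mgf_sum hY, Finset.prod_congr rfl fun i _ => hmgf i, Finset.prod_const,
          Finset.card_range]

theorem map_scaledPartialSum_eq {α : ℝ} (hα : α ≠ 0)
    (hY : ∀ i, Measurable (Y i)) (hnonneg : ∀ i ω, 0 ≤ Y i ω) (hindep : iIndepFun Y μ)
    (hident : ∀ i, μ.map (Y i) = ν)
    (hlaplace : ∀ l : ℝ, 0 ≤ l → ∫ x, exp (-(l * x)) ∂ν = exp (-(l ^ α))) {n : ℕ} (hn : n ≠ 0) :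
    μ.map (scaledPartialSum α Y n) = ν := by
  have := hindep.isProbabilityMeasure
  have : IsProbabilityMeasure ν := hident 0 ▸ Measure.isProbabilityMeasure_map (hY 0).aemeasurable
  have hS := measurable_scaledPartialSum hY α n
  have hn' : (0 : ℝ) < n := Nat.cast_pos.mpr (Nat.pos_of_ne_zero hn)
  have hc : 0 < (n : ℝ) ^ (1 / α) := rpow_pos_of_pos hn' _
  have hcα : ((n : ℝ) ^ (1 / α)) ^ α = n := by
    rw [← rpow_mul hn'.le, one_div_mul_cancel hα, rpow_one]
  refine Measure.ext_of_integral_exp_neg_mul_eq ?_ ?_ fun l hl => ?_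
  · refine (ae_map_iff hS.aemeasurable measurableSet_Ici).mpr (ae_of_all _ fun ω => ?_)
    exact mul_nonneg (inv_nonneg.mpr hc.le) (Finset.sum_nonneg fun i _ => hnonneg i ω)
  · rw [← hident 0]
    exact (ae_map_iff (hY 0).aemeasurable measurableSet_Ici).mpr (ae_of_all _ (hnonneg 0))
  have hscale : ∀ ω, l * scaledPartialSum α Y n ω
      = l * ((n : ℝ) ^ (1 / α))⁻¹ * ∑ i ∈ Finset.range n, Y i ω := fun ω => by
    rw [scaledPartialSum, mul_assoc]
  have hl' : 0 ≤ l * ((n : ℝ) ^ (1 / α))⁻¹ := by positivity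
  rw [integral_map hS.aemeasurable (by fun_prop), hlaplace l hl]
  simp_rw [hscale, integral_exp_neg_mul_sum_range hY hindep hident, hlaplace _ hl', ← exp_nat_mul,
    mul_rpow hl (inv_nonneg.mpr hc.le), inv_rpow hc.le, hcα]
  field_simp

end StableSums

end ProbabilityTheory

theorem stable_random_sum_representation_general
    {Ω : Type*} [MeasureSpace Ω] [IsProbabilityMeasure (ℙ : Measure Ω)]
    (α : ℝ) (hα0 : 0 < α)
    (ν : Measure ℝ)
    (Y : ℕ → Ω → ℝ) (P : Ω → ℕ) (Ybar : Ω → ℝ) (Ytil : Ω → ℝ)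
    (hYmeas : ∀ i, Measurable (Y i))
    (hPmeas : Measurable P)
    (hYbarMeas : Measurable Ybar)
    (hYnonneg : ∀ i ω, 0 ≤ Y i ω)
    -- the `Y_i` are i.i.d. with common law `ν`
    (hindep : iIndepFun Y ℙ)
    (hident : ∀ i, Measure.map (Y i) ℙ = ν)
    -- `ν` is the one-sided strictly `α`-stable law
    (hlaplace : ∀ l : ℝ, 0 ≤ l →
      ∫ x, Real.exp (-(l * x)) ∂ν = Real.exp (-(l ^ α)))
    -- `P` is independent of the family `(Y_n)`
    (hPindep : IndepFun P (fun ω => fun i => Y i ω) ℙ)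
    -- `Ybar ∼ ν` is independent of `(Y_n)` and `P`
    (hYbarLaw : Measure.map Ybar ℙ = ν)
    (hYbarIndep : IndepFun Ybar (fun ω => (P ω, fun i => Y i ω)) ℙ)
    -- definition of `Ỹ`
    (hYtil : ∀ ω, Ytil ω =
      if P ω = 0 then Ybar ω
      else ((P ω : ℝ) ^ (1 / α))⁻¹ * ∑ i ∈ Finset.range (P ω), Y i ω) :
    (∀ ω, (∑ i ∈ Finset.range (P ω), Y i ω) = (P ω : ℝ) ^ (1 / α) * Ytil ω) ∧
    Measure.map Ytil ℙ = ν ∧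
    IndepFun Ytil P ℙ := by
  have hα : α ≠ 0 := hα0.ne'
  set X : ℕ → Ω → ℝ := fun n => if n = 0 then Ybar else scaledPartialSum α Y n
  have hYtilX : Ytil = fun ω => X (P ω) ω := by
    funext ω
    rw [hYtil ω]
    split_ifs with h <;> simp [X, h, scaledPartialSum]
  have hX : ∀ n, Measurable (X n) := fun n => by
    by_cases hn : n = 0 <;> simp [X, hn, hYbarMeas, measurable_scaledPartialSum hYmeas]
  have hlaw : ∀ n, Measure.map (X n) ℙ = ν := fun n => by
    by_cases hn : n = 0
    · simpa [X, hn] using hYbarLaw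
    · simpa [X, hn] using map_scaledPartialSum_eq hα hYmeas hYnonneg hindep hident hlaplace hn
  have hindepP : ∀ n, IndepFun (X n) P ℙ := fun n => by
    by_cases hn : n = 0
    · simp only [X, hn, if_true]
      exact hYbarIndep.comp measurable_id measurable_fst
    · simp only [X, hn, if_false]
      exact hPindep.symm.comp
        (measurable_scaledPartialSum (fun i => measurable_pi_apply i) α n) measurable_id
  refine ⟨fun ω => ?_, hYtilX ▸ map_randomIndex_eq_and_indepFun hX hPmeas hlaw hindepP⟩
  rw [hYtil ω]
  split_ifs with h
  · simp [h, zero_rpow (inv_ne_zero hα)]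
  · rw [mul_inv_cancel_left₀ (rpow_pos_of_pos (Nat.cast_pos.mpr (Nat.pos_of_ne_zero h)) _).ne']

/-- Random-time version of the self-similarity of stable random walks: if `P` is an
integer valued random time independent of the i.i.d. `α`-stable increments `(Y_n)`,
then `Z_P = P^{1/α} Ỹ` where `Ỹ ∼ ν` is independent of `P`. -/
theorem stable_random_sum_representation
    {Ω : Type*} [MeasureSpace Ω] [IsProbabilityMeasure (ℙ : Measure Ω)]
    (α : ℝ) (hα0 : 0 < α) (hα1 : α < 1)
    (ν : Measure ℝ) [IsProbabilityMeasure ν]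
    (Y : ℕ → Ω → ℝ) (P : Ω → ℕ) (Ybar : Ω → ℝ) (Ytil : Ω → ℝ)
    (hYmeas : ∀ i, Measurable (Y i))
    (hPmeas : Measurable P)
    (hYbarMeas : Measurable Ybar)
    (hYnonneg : ∀ i ω, 0 ≤ Y i ω)
    -- the `Y_i` are i.i.d. with common law `ν`
    (hindep : iIndepFun Y ℙ)
    (hident : ∀ i, Measure.map (Y i) ℙ = ν)
    -- `ν` is the one-sided strictly `α`-stable law
    (hlaplace : ∀ l : ℝ, 0 ≤ l →
      ∫ x, Real.exp (-(l * x)) ∂ν = Real.exp (-(l ^ α)))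
    -- `P` is independent of the family `(Y_n)`
    (hPindep : IndepFun P (fun ω => fun i => Y i ω) ℙ)
    -- `Ybar ∼ ν` is independent of `(Y_n)` and `P`
    (hYbarLaw : Measure.map Ybar ℙ = ν)
    (hYbarIndep : IndepFun Ybar (fun ω => (P ω, fun i => Y i ω)) ℙ)
    -- definition of `Ỹ`
    (hYtil : ∀ ω, Ytil ω =
      if P ω = 0 then Ybar ω
      else ((P ω : ℝ) ^ (1 / α))⁻¹ * ∑ i ∈ Finset.range (P ω), Y i ω) :
    (∀ ω, (∑ i ∈ Finset.range (P ω), Y i ω) = (P ω : ℝ) ^ (1 / α) * Ytil ω) ∧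
    Measure.map Ytil ℙ = ν ∧
    IndepFun Ytil P ℙ :=
  stable_random_sum_representation_general α hα0 ν Y P Ybar Ytil hYmeas hPmeas hYbarMeas hYnonneg
    hindep hident hlaplace hPindep hYbarLaw hYbarIndep hYtil
end

section
/- Let a: ℝ → ℝ be odd, increasing, concave on [0,∞) with a(0) = 0. Then for all x ≥ 0, y ∈ ℝ, and z ≥ 0, |a(x + z) - a(y + z)| ≤ 2·a(2|x - y|). -/
/-!
Concavity on `[0, ∞)` together with `a 0 = 0` makes `a` subadditive there, so for
`0 ≤ t ≤ s` the increment `a s - a t` is at most `a (s - t)`. When the two points straddle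
the origin, oddness turns `a s - a t` into `a s + a (-t)`, and each term is at most
`a (s - t)` by monotonicity; the bound `2 a (s - t)` is then independent of a common shift.
-/

open Set

theorem ConcaveOn.smul_le_map_smul {E : Type*} [AddCommGroup E] [Module ℝ E] {s : Set E}
    {f : E → ℝ} (hf : ConcaveOn ℝ s f) (hs0 : 0 ∈ s) (hf0 : 0 ≤ f 0) {x : E} (hx : x ∈ s)
    {θ : ℝ} (hθ₀ : 0 ≤ θ) (hθ₁ : θ ≤ 1) : θ * f x ≤ f (θ • x) := by
  have h := hf.2 hs0 hx (sub_nonneg.2 hθ₁) hθ₀ (sub_add_cancel 1 θ)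
  simp only [smul_zero, zero_add, smul_eq_mul] at h
  nlinarith [mul_nonneg (sub_nonneg.2 hθ₁) hf0]

theorem ConcaveOn.map_add_le_of_nonneg {f : ℝ → ℝ} (hf : ConcaveOn ℝ (Ici 0) f)
    (hf0 : 0 ≤ f 0) {u v : ℝ} (hu : 0 ≤ u) (hv : 0 ≤ v) : f (u + v) ≤ f u + f v := by
  rcases (add_nonneg hu hv).eq_or_lt with huv | huv
  · obtain ⟨rfl, rfl⟩ : u = 0 ∧ v = 0 := ⟨by linarith, by linarith⟩
    simpa using hf0
  have hc : u + v ∈ Ici 0 := huv.le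
  have hθ {w : ℝ} (hw : 0 ≤ w) (hwc : w ≤ u + v) : w / (u + v) * f (u + v) ≤ f w := by
    simpa [div_mul_cancel₀ w huv.ne'] using
      hf.smul_le_map_smul self_mem_Ici hf0 hc (div_nonneg hw huv.le) ((div_le_one huv).2 hwc)
  calc f (u + v) = u / (u + v) * f (u + v) + v / (u + v) * f (u + v) := by
        field_simp
    _ ≤ f u + f v := add_le_add (hθ hu (by linarith)) (hθ hv (by linarith))

theorem abs_sub_le_two_mul_of_odd_of_monotone {a : ℝ → ℝ} (hodd : ∀ x, a (-x) = -a x)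
    (hmono : Monotone a) (hsub : ∀ u v, 0 ≤ u → 0 ≤ v → a (u + v) ≤ a u + a v)
    (h0 : a 0 = 0) {s t : ℝ} (hs : 0 ≤ s) : |a s - a t| ≤ 2 * a |s - t| := by
  have hpos : 0 ≤ a |s - t| := h0 ▸ hmono (abs_nonneg _)
  have hinc {p q : ℝ} (hq : 0 ≤ q) (hqp : q ≤ p) : a p - a q ≤ a (p - q) := by
    linarith [sub_add_cancel p q ▸ hsub (p - q) q (sub_nonneg.2 hqp) hq]
  rcases le_total t s with hts | hst
  · rw [abs_of_nonneg (sub_nonneg.2 (hmono hts))]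
    rw [abs_of_nonneg (sub_nonneg.2 hts)] at hpos ⊢
    rcases le_total 0 t with ht | ht
    · linarith [hinc ht hts]
    · have has : a s ≤ a (s - t) := hmono (by linarith)
      have hat : a (-t) ≤ a (s - t) := hmono (by linarith)
      rw [hodd] at hat
      linarith
  · rw [abs_of_nonpos (sub_nonpos.2 (hmono hst)), abs_sub_comm]
    rw [abs_sub_comm, abs_of_nonneg (sub_nonneg.2 hst)] at hpos
    rw [abs_of_nonneg (sub_nonneg.2 hst)]
    linarith [hinc hs hst]

/-- Lemma: for an odd, increasing function `a`, concave on `[0,∞)` with `a 0 = 0`,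
one has `|a (x+z) - a (y+z)| ≤ 2 a (2|x - y|)` for all `x ≥ 0`, `y ∈ ℝ`, `z ≥ 0`. -/
theorem abs_a_shift_le (a : ℝ → ℝ)
    (hodd : ∀ x : ℝ, a (-x) = -a x)
    (hmono : Monotone a)
    (hconc : ConcaveOn ℝ (Set.Ici 0) a)
    (h0 : a 0 = 0) :
    ∀ x y z : ℝ, 0 ≤ x → 0 ≤ z →
      |a (x + z) - a (y + z)| ≤ 2 * a (2 * |x - y|) := by
  intro x y z hx hz
  have hshift : |x + z - (y + z)| = |x - y| := by rw [add_sub_add_right_eq_sub]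
  calc |a (x + z) - a (y + z)|
      ≤ 2 * a |x - y| := hshift ▸ abs_sub_le_two_mul_of_odd_of_monotone hodd hmono
        (fun _ _ ↦ hconc.map_add_le_of_nonneg h0.ge) h0 (add_nonneg hx hz)
    _ ≤ 2 * a (2 * |x - y|) := by
        gcongr
        exact hmono (by linarith [abs_nonneg (x - y)])
end
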